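/- Let p be a prime, ℓ₁ ≥ ℓ₂ ≥ 1, and let G = Aut(ℤ/p^{ℓ₁}ℤ ⊕ ℤ/p^{ℓ₂}ℤ). The restriction of automorphisms to the submodule p·(ℤ/p^{ℓ₁}ℤ ⊕ ℤ/p^{ℓ₂}ℤ) defines a surjective group homomorphism G → Aut(ℤ/p^{ℓ₁−1}ℤ ⊕ ℤ/p^{ℓ₂−1}ℤ) (interpreting ℤ/p⁰ℤ = 0). -/

import Mathlib

/-!
Write `M = ℤ/p^ℓ₁ × ℤ/p^ℓ₂`, `N = ℤ/p^(ℓ₁-1) × ℤ/p^(ℓ₂-1)`, `e : N → M` for multiplication by `p`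
(injective, with image `pM`) and `ρ : M → N` for reduction, so that `e ∘ ρ = p`. An automorphism
`φ` of `M` preserves `pM`, which gives `π φ = e⁻¹ ∘ φ ∘ e`; and `π φ = ψ` as soon as
`ρ ∘ φ = ψ ∘ ρ`. To lift `ψ`, send the two generators of `M` to preimages under `ρ` of the images
under `ψ` of the generators of `N`: since `e ∘ ρ = p`, these preimages have small enough order.
The resulting endomorphism is onto modulo `ker ρ`, hence modulo `pM` when `ℓ₂ ≥ 2`, hence onto
by the Nakayama argument for the nilpotent `p`, hence bijective since `M` is finite.
-/

theorem AddMonoidHom.surjective_of_forall_eq_add_nsmul {M : Type*} [AddCommGroup M]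
    (f : M →+ M) (n k : ℕ) (hk : ∀ x : M, n ^ k • x = 0) (h : ∀ x, ∃ y z, x = f y + n • z) :
    Function.Surjective f := by
  have key : ∀ j, ∀ x : M, ∃ y z, x = f y + n ^ j • z := by
    intro j
    induction j with
    | zero => exact fun x ↦ ⟨0, x, by simp⟩
    | succ j ih =>
      intro x
      obtain ⟨y, z, rfl⟩ := ih x
      obtain ⟨w, v, rfl⟩ := h z
      refine ⟨y + n ^ j • w, v, ?_⟩
      rw [map_add, map_nsmul, smul_add, smul_smul, ← pow_succ]
      abel
  intro x
  obtain ⟨y, z, rfl⟩ := key k x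
  exact ⟨y, by rw [hk z, add_zero]⟩

namespace AddAut

variable {M N : Type*} [AddCommGroup M] [AddCommGroup N] {n : ℕ} {e : N →+ M} {ρ : M →+ N}

section

variable (hρ : Function.Surjective ρ)

noncomputable def restrictFun (φ : AddAut M) (s : N) : N :=
  ρ (φ (Function.surjInv hρ s))

variable (heρ : ∀ x, e (ρ x) = n • x)
include heρ

theorem apply_restrictFun (φ : AddAut M) (s : N) :
    e (restrictFun hρ φ s) = φ (e s) := by
  rw [restrictFun, heρ, ← map_nsmul, ← heρ, Function.surjInv_eq hρ]

variable (he : Function.Injective e)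
include he

noncomputable def restrict (φ : AddAut M) : AddAut N where
  toFun := restrictFun hρ φ
  invFun := restrictFun hρ (-φ)
  left_inv s := he <| by rw [apply_restrictFun hρ heρ, apply_restrictFun hρ heρ, neg_apply_self]
  right_inv s := he <| by rw [apply_restrictFun hρ heρ, apply_restrictFun hρ heρ, apply_neg_self]
  map_add' s t := he <| by simp only [map_add, apply_restrictFun hρ heρ]

noncomputable def restrictHom : AddAut M →+ AddAut N :=
  AddMonoidHom.mk' (restrict hρ heρ he) fun φ ψ ↦ AddEquiv.ext fun s ↦ he <| by
    simp only [restrict, AddEquiv.coe_mk, Equiv.coe_fn_mk, add_apply, apply_restrictFun hρ heρ]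

theorem apply_restrictHom (φ : AddAut M) (s : N) :
    e (restrictHom hρ heρ he φ s) = φ (e s) :=
  apply_restrictFun hρ heρ φ s

theorem restrictHom_eq_of_comp {φ : AddAut M} {ψ : AddAut N} (h : ∀ x, ρ (φ x) = ψ (ρ x)) :
    restrictHom hρ heρ he φ = ψ := by
  ext s
  obtain ⟨x, rfl⟩ := hρ s
  apply he
  rw [apply_restrictHom, heρ, map_nsmul, ← heρ, h]

theorem exists_restrictHom_eq [Finite M] (ψ : AddAut N) (f : M →+ M)
    (hf : ∀ x, ρ (f x) = ψ (ρ x)) {k : ℕ} (hk : ∀ x : M, n ^ k • x = 0)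
    (hker : ∀ x, ρ x = 0 → ∃ y z, x = f y + n • z) :
    ∃ φ, restrictHom hρ heρ he φ = ψ := by
  have hsurj : Function.Surjective f := by
    refine f.surjective_of_forall_eq_add_nsmul n k hk fun x ↦ ?_
    obtain ⟨y, hy⟩ : ∃ y, ψ (ρ y) = ρ x := ψ.surjective.comp hρ _
    obtain ⟨y', z, hz⟩ := hker (x - f y) (by rw [map_sub, hf, hy, sub_self])
    exact ⟨y + y', z, by rw [map_add, add_assoc, ← hz]; abel⟩
  exact ⟨AddEquiv.ofBijective f ⟨Finite.injective_iff_surjective.2 hsurj, hsurj⟩,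
    restrictHom_eq_of_comp hρ heρ he hf⟩

end

theorem pow_succ_nsmul_eq_zero (heρ : ∀ x, e (ρ x) = n • x) {x : M} {k : ℕ}
    (hx : n ^ k • ρ x = 0) : n ^ (k + 1) • x = 0 := by
  rw [pow_succ', mul_nsmul, ← heρ, ← map_nsmul, hx, map_zero]

end AddAut

namespace ZMod

def mulP (p ℓ : ℕ) : ZMod (p ^ (ℓ - 1)) →+ ZMod (p ^ ℓ) :=
  ZMod.lift _ ⟨zmultiplesHom _ (p : ZMod (p ^ ℓ)), by
    rw [zmultiplesHom_apply, natCast_zsmul, nsmul_eq_mul, ← Nat.cast_mul, natCast_eq_zero_iff]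
    rcases ℓ with _ | ℓ
    · simp
    · simp [pow_succ]⟩

variable {p ℓ : ℕ}

theorem mulP_intCast (k : ℤ) : mulP p ℓ k = p * (k : ZMod (p ^ ℓ)) := by
  simp [mulP, mul_comm]

theorem mulP_apply [NeZero p] (x : ZMod (p ^ (ℓ - 1))) :
    mulP p ℓ x = p * (x.val : ZMod (p ^ ℓ)) := by
  conv_lhs => rw [← natCast_zmod_val x, ← Int.cast_natCast]
  rw [mulP_intCast, Int.cast_natCast]

theorem mulP_castHom (y : ZMod (p ^ ℓ)) :
    mulP p ℓ (castHom (pow_dvd_pow p (Nat.sub_le ℓ 1)) _ y) = p • y := by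
  obtain ⟨k, rfl⟩ := intCast_surjective y
  rw [map_intCast, mulP_intCast, nsmul_eq_mul]

theorem mulP_injective [NeZero p] : Function.Injective (mulP p ℓ) := by
  refine (lift_injective _).2 fun k hk ↦ ?_
  rw [zmultiplesHom_apply, zsmul_eq_mul, ← Int.cast_natCast, ← Int.cast_mul,
    intCast_zmod_eq_zero_iff_dvd] at hk
  rw [intCast_zmod_eq_zero_iff_dvd]
  rcases ℓ with _ | ℓ
  · simp
  · rw [Nat.add_sub_cancel, Nat.cast_pow, pow_succ] at *
    exact (mul_dvd_mul_iff_right (by exact_mod_cast NeZero.ne p)).1 hk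

theorem exists_nsmul_eq_of_castHom_eq_zero (hℓ : 2 ≤ ℓ) {y : ZMod (p ^ ℓ)}
    (hy : castHom (pow_dvd_pow p (Nat.sub_le ℓ 1)) (ZMod (p ^ (ℓ - 1))) y = 0) :
    ∃ z, p • z = y := by
  obtain ⟨m, rfl⟩ : ∃ m, ℓ = m + 2 := ⟨ℓ - 2, by omega⟩
  obtain ⟨k, rfl⟩ := intCast_surjective y
  rw [map_intCast, intCast_zmod_eq_zero_iff_dvd] at hy
  obtain ⟨j, rfl⟩ := hy
  refine ⟨((p ^ m * j : ℤ) : ZMod (p ^ (m + 2))), ?_⟩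
  rw [nsmul_eq_mul, show m + 2 - 1 = m + 1 from rfl]
  push_cast
  ring

variable {a b : ℕ} {A : Type*}

def liftProd [AddCommGroup A] (x y : A) (hx : (a : ℤ) • x = 0) (hy : (b : ℤ) • y = 0) :
    ZMod a × ZMod b →+ A :=
  (lift a ⟨zmultiplesHom A x, hx⟩).coprod (lift b ⟨zmultiplesHom A y, hy⟩)

theorem liftProd_intCast [AddCommGroup A] {x y : A} (hx : (a : ℤ) • x = 0)
    (hy : (b : ℤ) • y = 0) (k m : ℤ) : liftProd x y hx hy (k, m) = k • x + m • y := by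
  simp [liftProd]

theorem prod_addMonoidHom_ext [AddGroup A] {f g : ZMod a × ZMod b →+ A}
    (h₁ : f (1, 0) = g (1, 0)) (h₂ : f (0, 1) = g (0, 1)) : f = g := by
  ext ⟨u, v⟩
  obtain ⟨k, rfl⟩ := intCast_surjective u
  obtain ⟨m, rfl⟩ := intCast_surjective v
  have hkm : ((k : ZMod a), (m : ZMod b)) = k • (1, 0) + m • (0, 1) := by ext <;> simp
  rw [hkm, map_add, map_add, map_zsmul, map_zsmul, map_zsmul, map_zsmul, h₁, h₂]

end ZMod

section PrimePowerProd

variable (p ℓ₁ ℓ₂ : ℕ)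

def mulPProd : ZMod (p ^ (ℓ₁ - 1)) × ZMod (p ^ (ℓ₂ - 1)) →+ ZMod (p ^ ℓ₁) × ZMod (p ^ ℓ₂) :=
  (ZMod.mulP p ℓ₁).prodMap (ZMod.mulP p ℓ₂)

def castHomProd : ZMod (p ^ ℓ₁) × ZMod (p ^ ℓ₂) →+ ZMod (p ^ (ℓ₁ - 1)) × ZMod (p ^ (ℓ₂ - 1)) :=
  (ZMod.castHom (pow_dvd_pow p (Nat.sub_le ℓ₁ 1)) _).toAddMonoidHom.prodMap
    (ZMod.castHom (pow_dvd_pow p (Nat.sub_le ℓ₂ 1)) _).toAddMonoidHom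

variable {p ℓ₁ ℓ₂}

theorem castHomProd_apply (x : ZMod (p ^ ℓ₁) × ZMod (p ^ ℓ₂)) :
    castHomProd p ℓ₁ ℓ₂ x = (ZMod.castHom (pow_dvd_pow p (Nat.sub_le ℓ₁ 1)) _ x.1,
      ZMod.castHom (pow_dvd_pow p (Nat.sub_le ℓ₂ 1)) _ x.2) :=
  rfl

theorem mulPProd_castHomProd (x : ZMod (p ^ ℓ₁) × ZMod (p ^ ℓ₂)) :
    mulPProd p ℓ₁ ℓ₂ (castHomProd p ℓ₁ ℓ₂ x) = p • x :=
  Prod.ext (ZMod.mulP_castHom x.1) (ZMod.mulP_castHom x.2)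

theorem castHomProd_surjective : Function.Surjective (castHomProd p ℓ₁ ℓ₂) :=
  (ZMod.castHom_surjective (pow_dvd_pow p (Nat.sub_le ℓ₁ 1))).prodMap
    (ZMod.castHom_surjective (pow_dvd_pow p (Nat.sub_le ℓ₂ 1)))

variable [NeZero p]

theorem mulPProd_injective : Function.Injective (mulPProd p ℓ₁ ℓ₂) :=
  ZMod.mulP_injective.prodMap ZMod.mulP_injective

theorem mulPProd_apply (s : ZMod (p ^ (ℓ₁ - 1)) × ZMod (p ^ (ℓ₂ - 1))) :
    mulPProd p ℓ₁ ℓ₂ s = ((p : ZMod (p ^ ℓ₁)) * (s.1.val : ZMod (p ^ ℓ₁)),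
      (p : ZMod (p ^ ℓ₂)) * (s.2.val : ZMod (p ^ ℓ₂))) :=
  Prod.ext (ZMod.mulP_apply s.1) (ZMod.mulP_apply s.2)

variable (p ℓ₁ ℓ₂) in
noncomputable def restrictMulP : AddAut (ZMod (p ^ ℓ₁) × ZMod (p ^ ℓ₂)) →+
    AddAut (ZMod (p ^ (ℓ₁ - 1)) × ZMod (p ^ (ℓ₂ - 1))) :=
  AddAut.restrictHom castHomProd_surjective mulPProd_castHomProd mulPProd_injective

theorem apply_restrictMulP (φ : AddAut (ZMod (p ^ ℓ₁) × ZMod (p ^ ℓ₂)))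
    (s : ZMod (p ^ (ℓ₁ - 1)) × ZMod (p ^ (ℓ₂ - 1))) :
    mulPProd p ℓ₁ ℓ₂ (restrictMulP p ℓ₁ ℓ₂ φ s) = φ (mulPProd p ℓ₁ ℓ₂ s) :=
  AddAut.apply_restrictHom _ _ _ φ s

theorem exists_restrictMulP_eq (hℓ₁ : 1 ≤ ℓ₁) (hℓ₂ : 1 ≤ ℓ₂)
    (ψ : AddAut (ZMod (p ^ (ℓ₁ - 1)) × ZMod (p ^ (ℓ₂ - 1))))
    {x₁ x₂ : ZMod (p ^ ℓ₁) × ZMod (p ^ ℓ₂)}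
    (hx₁ : castHomProd p ℓ₁ ℓ₂ x₁ = ψ (1, 0)) (hx₂ : castHomProd p ℓ₁ ℓ₂ x₂ = ψ (0, 1))
    (hker : ∀ x, castHomProd p ℓ₁ ℓ₂ x = 0 → ∃ (k : ℤ) (z : _), x = k • x₂ + p • z) :
    ∃ φ, restrictMulP p ℓ₁ ℓ₂ φ = ψ := by
  have htors₁ : ((p ^ ℓ₁ : ℕ) : ℤ) • x₁ = 0 := by
    have := AddAut.pow_succ_nsmul_eq_zero mulPProd_castHomProd (k := ℓ₁ - 1)
      (by rw [hx₁, ← map_nsmul]; simp)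
    rwa [Nat.sub_add_cancel hℓ₁, ← natCast_zsmul] at this
  have htors₂ : ((p ^ ℓ₂ : ℕ) : ℤ) • x₂ = 0 := by
    have := AddAut.pow_succ_nsmul_eq_zero mulPProd_castHomProd (k := ℓ₂ - 1)
      (by rw [hx₂, ← map_nsmul]; simp)
    rwa [Nat.sub_add_cancel hℓ₂, ← natCast_zsmul] at this
  set f := ZMod.liftProd x₁ x₂ htors₁ htors₂
  have hf₁ : f (1, 0) = x₁ := by simpa using ZMod.liftProd_intCast htors₁ htors₂ 1 0
  have hf₂ : f (0, 1) = x₂ := by simpa using ZMod.liftProd_intCast htors₁ htors₂ 0 1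
  have hf : (castHomProd p ℓ₁ ℓ₂).comp f = (ψ : _ →+ _).comp (castHomProd p ℓ₁ ℓ₂) := by
    refine ZMod.prod_addMonoidHom_ext ?_ ?_ <;>
      simp only [AddMonoidHom.comp_apply, hf₁, hf₂, hx₁, hx₂, castHomProd_apply, map_one,
        map_zero, AddMonoidHom.coe_coe]
  refine AddAut.exists_restrictHom_eq _ _ _ ψ f (DFunLike.congr_fun hf) (k := ℓ₁ + ℓ₂) ?_ ?_
  · intro x
    rw [nsmul_eq_mul, pow_add, Nat.cast_mul]
    ext
    · simp only [Prod.fst_mul, Prod.fst_natCast, ZMod.natCast_self, zero_mul, Prod.fst_zero]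
    · simp only [Prod.snd_mul, Prod.snd_natCast, ZMod.natCast_self, mul_zero, zero_mul,
        Prod.snd_zero]
  · intro x hx
    obtain ⟨k, z, rfl⟩ := hker x hx
    refine ⟨((0 : ℤ), k), z, ?_⟩
    rw [ZMod.liftProd_intCast, zero_smul, zero_add]

theorem restrictMulP_surjective (h12 : ℓ₂ ≤ ℓ₁) (h2 : 1 ≤ ℓ₂) :
    Function.Surjective (restrictMulP p ℓ₁ ℓ₂) := by
  intro ψ
  obtain rfl | h1 := (h2.trans h12).eq_or_lt
  · obtain rfl : ℓ₂ = 1 := by omega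
    have : Subsingleton (ZMod (p ^ (1 - 1))) := by rw [Nat.sub_self, pow_zero]; infer_instance
    exact ⟨0, AddEquiv.ext fun _ ↦ Subsingleton.elim _ _⟩
  obtain ⟨x₁, hx₁⟩ := castHomProd_surjective (ψ (1, 0))
  obtain rfl | h2 := h2.eq_or_lt
  · -- The second factor of `N` is zero, so the lift `0` of `ψ (0, 1)` is useless; take `(0, 1)`.
    have : Subsingleton (ZMod (p ^ (1 - 1))) := by rw [Nat.sub_self, pow_zero]; infer_instance
    refine exists_restrictMulP_eq h1.le le_rfl ψ hx₁ (x₂ := (0, 1))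
      (by rw [castHomProd_apply, map_zero, map_one, Subsingleton.elim (1 : ZMod _) 0,
        Prod.mk_zero_zero, map_zero]) fun x hx ↦ ?_
    rw [castHomProd_apply, Prod.ext_iff] at hx
    obtain ⟨z, hz⟩ := ZMod.exists_nsmul_eq_of_castHom_eq_zero h1 hx.1
    obtain ⟨k, hk⟩ := ZMod.intCast_surjective x.2
    exact ⟨k, (z, 0), Prod.ext (by simp [hz]) (by simp [hk])⟩
  · obtain ⟨x₂, hx₂⟩ := castHomProd_surjective (ψ (0, 1))
    refine exists_restrictMulP_eq h1.le h2.le ψ hx₁ hx₂ fun x hx ↦ ?_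
    rw [castHomProd_apply, Prod.ext_iff] at hx
    obtain ⟨z₁, hz₁⟩ := ZMod.exists_nsmul_eq_of_castHom_eq_zero h1 hx.1
    obtain ⟨z₂, hz₂⟩ := ZMod.exists_nsmul_eq_of_castHom_eq_zero h2 hx.2
    exact ⟨0, (z₁, z₂), by simp [hz₁, hz₂]⟩

end PrimePowerProd

/-- Restriction of automorphisms to `p·M` gives a surjective homomorphism
`Aut(ℤ/p^ℓ₁ℤ ⊕ ℤ/p^ℓ₂ℤ) → Aut(ℤ/p^(ℓ₁−1)ℤ ⊕ ℤ/p^(ℓ₂−1)ℤ)`, where `pM` is identified with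
`ℤ/p^(ℓ₁−1)ℤ ⊕ ℤ/p^(ℓ₂−1)ℤ` via `(s₁, s₂) ↦ (p·s̃₁, p·s̃₂)`. -/
theorem stmt_17 (p ℓ₁ ℓ₂ : ℕ) (hp : p.Prime) (h12 : ℓ₂ ≤ ℓ₁) (h2 : 1 ≤ ℓ₂) :
    ∃ π : AddAut (ZMod (p ^ ℓ₁) × ZMod (p ^ ℓ₂)) →+
        AddAut (ZMod (p ^ (ℓ₁ - 1)) × ZMod (p ^ (ℓ₂ - 1))),
      Function.Surjective π ∧
      ∀ (φ : AddAut (ZMod (p ^ ℓ₁) × ZMod (p ^ ℓ₂)))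
        (s : ZMod (p ^ (ℓ₁ - 1)) × ZMod (p ^ (ℓ₂ - 1))),
        φ ((p : ZMod (p ^ ℓ₁)) * (s.1.val : ZMod (p ^ ℓ₁)),
            (p : ZMod (p ^ ℓ₂)) * (s.2.val : ZMod (p ^ ℓ₂))) =
          ((p : ZMod (p ^ ℓ₁)) * (((π φ) s).1.val : ZMod (p ^ ℓ₁)),
            (p : ZMod (p ^ ℓ₂)) * (((π φ) s).2.val : ZMod (p ^ ℓ₂))) := by
  have : NeZero p := ⟨hp.ne_zero⟩
  refine ⟨restrictMulP p ℓ₁ ℓ₂, restrictMulP_surjective h12 h2, fun φ s ↦ ?_⟩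
  rw [← mulPProd_apply, ← mulPProd_apply, apply_restrictMulP]
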